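/- Let f : ℝⁿ → ℝ be a C² function, c ∈ ℝ and ε > 0, and assume ∇f(x) ≠ 0 for every x with |f(x) − c| < ε. Suppose there exist a symmetric positive definite n×n real matrix A, a constant γ ∈ (0,1) and R > 0 such that for every x ∈ ℝⁿ with |f(x) − c| < ε and ⟨Ax, x⟩^{1/2} ≥ R one has |⟨∇f(x)/‖∇f(x)‖, Ax/‖Ax‖⟩| ≤ γ. Then f is locally trivial over a neighbourhood of c: there exist δ with 0 < δ ≤ ε and a homeomorphism Φ : f⁻¹((c−δ, c+δ)) → (c−δ, c+δ) × f⁻¹(c) whose first component is f. In particular c is not a bifurcation value of f. -/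

import Mathlib

/-!
Off the ellipsoid `⟪A x, x⟫ ≤ R²` and in the band `|f - c| < ε`, the gradient `∇f x` is never
parallel to `A x`. So `∇f / ‖∇f‖²` can be corrected, along the component of `A x` orthogonal to
`∇f`, to a `C¹` vector field `Y` with `⟪∇f, Y⟫ = 1` that is orthogonal to `A x` once
`⟪A x, x⟫ ≥ R² + 1`; multiply it by a cutoff `θ (f x)` equal to `1` near the level `c`. Since
`⟪A x, x⟫` is then constant along trajectories beyond `R² + 1`, the trajectories stay in compact
sets and `Y` has a global flow `Ψ`. Along it `f (Ψ t x) = f x + t` near the level `c`, so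
`x ↦ (f x, Ψ (c - f x) x)` trivializes `f` over `(c - ε/2, c + ε/2)`.
-/

open Filter Topology
open scoped RealInnerProductSpace

/-- The action of an `n × n` real matrix on Euclidean space `ℝⁿ`. -/
noncomputable def matApply {n : ℕ} (A : Matrix (Fin n) (Fin n) ℝ)
    (x : EuclideanSpace ℝ (Fin n)) : EuclideanSpace ℝ (Fin n) :=
  (EuclideanSpace.equiv (Fin n) ℝ).symm (A.mulVec (EuclideanSpace.equiv (Fin n) ℝ x))

open Set Function Metric
open scoped NNReal

lemma le_max_of_hasDerivAt_eq_zero {m m' : ℝ → ℝ} {B : ℝ} (hm : ∀ t, HasDerivAt m (m' t) t)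
    (hB : ∀ t, B ≤ m t → m' t = 0) (t : ℝ) : m t ≤ max B (m 0) := by
  have forward {m m' : ℝ → ℝ} (hm : ∀ t, HasDerivAt m (m' t) t)
      (hB : ∀ t, B ≤ m t → m' t = 0) {t : ℝ} (ht : 0 ≤ t) : m t ≤ max B (m 0) := by
    refine le_of_forall_pos_le_add fun e he ↦ ?_
    set r := e / (t + 1)
    -- a barrier of slope `r > 0` cannot be crossed, since `m' = 0` at a contact point
    have := image_le_of_deriv_right_lt_deriv_boundary (a := 0) (b := t)
      (B := fun s ↦ max B (m 0) + r * s) (B' := fun _ ↦ r)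
      (fun s _ ↦ (hm s).continuousAt.continuousWithinAt) (fun s _ ↦ (hm s).hasDerivWithinAt)
      (by simp) (fun s ↦ by simpa using ((hasDerivAt_id s).const_mul r).const_add (max B (m 0)))
      (fun s hs hms ↦ by
        rw [hB s (by nlinarith [le_max_left B (m 0), hs.1, show 0 < r by positivity])]
        positivity) ⟨ht, le_rfl⟩
    have : r * t ≤ e := by
      rw [div_mul_eq_mul_div, div_le_iff₀ (by linarith)]; nlinarith
    linarith
  rcases le_total 0 t with ht | ht
  · exact forward hm hB ht
  · have hm' (s : ℝ) : HasDerivAt (fun s ↦ m (-s)) (-m' (-s)) s := by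
      have := (hm (-s)).comp s (hasDerivAt_neg s)
      simp only [mul_neg, mul_one] at this
      exact this
    simpa using forward hm' (fun s hs ↦ by simp [hB _ hs]) (neg_nonneg.2 ht)

lemma eq_add_of_hasDerivAt_of_eqOn_one {h θ : ℝ → ℝ} {K : ℝ≥0} (hθ : LipschitzWith K θ)
    (hh : ∀ t, HasDerivAt h (θ (h t)) t) {a b : ℝ} (hθ1 : ∀ u ∈ Ioo a b, θ u = 1)
    (h0 : h 0 ∈ Ioo a b) {t : ℝ} (ht : h 0 + t ∈ Ioo a b) : h t = h 0 + t := by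
  refine ODE_solution_unique_of_mem_Ioo (v := fun _ ↦ θ) (s := fun _ ↦ univ) (a := a - h 0)
    (b := b - h 0) (fun _ _ ↦ hθ.lipschitzOnWith) (t₀ := 0) (by simpa using h0)
    (fun s _ ↦ ⟨hh s, trivial⟩) (fun s hs ↦ ⟨?_, trivial⟩) (by simp)
    (by constructor <;> linarith [ht.1, ht.2])
  rw [hθ1 _ ⟨by linarith [hs.1], by linarith [hs.2]⟩]
  exact (hasDerivAt_id s).const_add _

section Flow

variable {E : Type*} [NormedAddCommGroup E] {v : E → E} {K C : ℝ≥0}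

lemma IsPicardLindelof.of_lipschitzWith_of_norm_le (hv : LipschitzWith K v)
    (hC : ∀ x, ‖v x‖ ≤ C) (x₀ : E) (r T : ℝ≥0) :
    IsPicardLindelof (fun _ ↦ v) (tmin := -T) (tmax := T) ⟨0, by simp⟩ x₀ (r + C * T) r C K :=
  .of_time_independent (fun x _ ↦ hC x) hv.lipschitzOnWith (by simp)

variable [NormedSpace ℝ E]

lemma IsIntegralCurve.eq_of_lipschitzWith (hv : LipschitzWith K v) {γ γ' : ℝ → E}
    (hγ : IsIntegralCurve γ fun _ ↦ v) (hγ' : IsIntegralCurve γ' fun _ ↦ v) {t₀ : ℝ}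
    (h : γ t₀ = γ' t₀) : γ = γ' :=
  ODE_solution_unique_univ (fun _ ↦ hv.lipschitzOnWith (s := univ))
    (fun t ↦ ⟨hγ t, trivial⟩) (fun t ↦ ⟨hγ' t, trivial⟩) h

lemma exists_isIntegralCurve_of_lipschitzWith [CompleteSpace E] (hv : LipschitzWith K v)
    (hC : ∀ x, ‖v x‖ ≤ C) (x : E) : ∃ γ : ℝ → E, γ 0 = x ∧ IsIntegralCurve γ fun _ ↦ v := by
  choose γ hγ0 hγ using fun k : ℕ ↦
    (IsPicardLindelof.of_lipschitzWith_of_norm_le hv hC x 0 k)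
      |>.exists_eq_forall_mem_Icc_hasDerivWithinAt₀
  have deriv (k : ℕ) {t : ℝ} (ht : |t| < k) : HasDerivAt (γ k) (v (γ k t)) t := by
    rw [abs_lt] at ht
    exact (hγ k t ⟨ht.1.le, ht.2.le⟩).hasDerivAt (Icc_mem_nhds ht.1 ht.2)
  have agree (j k : ℕ) {t : ℝ} (ht : |t| < min (j : ℝ) k) : γ j t = γ k t := by
    have hm : (0 : ℝ) < min (j : ℝ) k := (abs_nonneg t).trans_lt ht
    refine ODE_solution_unique_of_mem_Ioo (v := fun _ ↦ v) (s := fun _ ↦ univ)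
      (fun _ _ ↦ hv.lipschitzOnWith) (t₀ := 0) ⟨by linarith, hm⟩ ?_ ?_ (by simp [hγ0])
      (abs_lt.1 ht)
    all_goals
      intro s hs
      refine ⟨deriv _ ?_, trivial⟩
      have := abs_lt.2 hs
      linarith [min_le_left (j : ℝ) k, min_le_right (j : ℝ) k]
  refine ⟨fun t ↦ γ (⌈|t|⌉₊ + 1) t, by simpa using hγ0 1, fun t ↦ ?_⟩
  have hk : |t| < ((⌈|t|⌉₊ + 1 : ℕ) : ℝ) := by push_cast; linarith [Nat.le_ceil |t|]
  have heq : (fun s ↦ γ (⌈|s|⌉₊ + 1) s) =ᶠ[𝓝 t] γ (⌈|t|⌉₊ + 1) := by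
    filter_upwards [(isOpen_lt continuous_abs continuous_const).mem_nhds hk] with s hs
    refine agree _ _ (lt_min ?_ hs)
    push_cast; linarith [Nat.le_ceil |s|]
  simpa only [heq.eq_of_nhds] using (deriv _ hk).congr_of_eventuallyEq heq

lemma continuous_uncurry_of_isIntegralCurve [CompleteSpace E] (hv : LipschitzWith K v)
    (hC : ∀ x, ‖v x‖ ≤ C) {φ : ℝ → E → E} (h0 : ∀ x, φ 0 x = x)
    (hφ : ∀ x, IsIntegralCurve (φ · x) fun _ ↦ v) : Continuous (uncurry φ) := by
  refine continuous_iff_continuousAt.2 fun ⟨t₀, x₀⟩ ↦ ?_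
  set T : ℕ := ⌈|t₀|⌉₊ + 1
  have hT : |t₀| < T := by push_cast [T]; linarith [Nat.le_ceil |t₀|]
  obtain ⟨α, hα, hαc⟩ := (IsPicardLindelof.of_lipschitzWith_of_norm_le hv hC x₀ 1 T)
    |>.exists_forall_mem_closedBall_eq_hasDerivWithinAt_continuousOn
  have hαφ : EqOn (uncurry φ) (α ∘ Prod.swap) (Icc (-T : ℝ) T ×ˢ closedBall x₀ 1) := by
    rintro ⟨t, x⟩ ⟨ht, hx⟩
    obtain ⟨hαx0, hαx⟩ := hα x (by simpa using hx)
    refine ODE_solution_unique_of_mem_Icc (v := fun _ ↦ v) (s := fun _ ↦ univ) (t₀ := 0)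
      (fun _ _ ↦ hv.lipschitzOnWith) (by simp [T, -Nat.cast_add]) (hφ x).continuous.continuousOn
      (fun s _ ↦ hφ x s) (fun _ _ ↦ trivial) (fun s hs ↦ (hαx s hs).continuousWithinAt) ?_
      (fun _ _ ↦ trivial) (by simpa [h0] using hαx0.symm) (by simpa using ht)
    intro s hs
    exact (hαx s (by simpa using Ioo_subset_Icc_self hs)).hasDerivAt
      (Icc_mem_nhds (by simpa using hs.1) (by simpa using hs.2))
  have hnhds : Icc (-T : ℝ) T ×ˢ closedBall x₀ 1 ∈ 𝓝 (t₀, x₀) :=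
    prod_mem_nhds (Icc_mem_nhds (by linarith [neg_abs_le t₀]) (by linarith [le_abs_self t₀]))
      (closedBall_mem_nhds x₀ one_pos)
  refine ((hαc.comp continuous_swap.continuousOn ?_).continuousAt hnhds).congr
    (hαφ.eventuallyEq_of_mem hnhds).symm
  exact fun p hp ↦ ⟨by simpa using hp.2, by simpa using hp.1⟩

structure IsFlowOf (v : E → E) (φ : ℝ → E → E) : Prop where
  continuous : Continuous (uncurry φ)
  zero : ∀ x, φ 0 x = x
  isIntegralCurve : ∀ x, IsIntegralCurve (φ · x) fun _ ↦ v
  add : ∀ x t s, φ s (φ t x) = φ (s + t) x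

theorem exists_isFlowOf_of_lipschitzWith [CompleteSpace E] (hv : LipschitzWith K v)
    (hC : ∀ x, ‖v x‖ ≤ C) : ∃ φ, IsFlowOf v φ := by
  choose φ h0 hφ using exists_isIntegralCurve_of_lipschitzWith hv hC
  refine ⟨fun t x ↦ φ x t, continuous_uncurry_of_isIntegralCurve hv hC h0 hφ, h0, hφ,
    fun x t s ↦ ?_⟩
  have := (hφ (φ x t)).eq_of_lipschitzWith hv ((hφ x).comp_add t) (t₀ := 0) (by simp [h0])
  exact congrFun this s

theorem exists_isFlowOf_of_hasCompactSupport [CompleteSpace E] (hv : ContDiff ℝ 1 v)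
    (hs : HasCompactSupport v) : ∃ φ, IsFlowOf v φ := by
  obtain ⟨K, hK⟩ := hv.lipschitzWith_of_hasCompactSupport hs one_ne_zero
  obtain ⟨C, hC⟩ := hs.exists_bound_of_continuous hv.continuous
  exact exists_isFlowOf_of_lipschitzWith (C := C.toNNReal) hK
    fun x ↦ (hC x).trans (le_max_left _ _)

open Real in
theorem exists_isFlowOf_of_fderiv_eq_zero [CompleteSpace E] {Y : E → E} {q : E → ℝ}
    (hY : ContDiff ℝ 1 Y) (hq : ContDiff ℝ 1 q) (hcpt : ∀ M, IsCompact {x | q x ≤ M}) {B : ℝ}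
    (htan : ∀ x, B ≤ q x → fderiv ℝ q x (Y x) = 0) : ∃ φ, IsFlowOf Y φ := by
  set X : ℝ → E → E := fun M x ↦ smoothTransition (M - q x) • Y x
  have hX (M : ℝ) : ContDiff ℝ 1 (X M) :=
    (smoothTransition.contDiff.comp (contDiff_const.sub hq)).smul hY
  have hXs (M : ℝ) : HasCompactSupport (X M) := HasCompactSupport.intro (hcpt M) fun x hx ↦ by
    simp [X, smoothTransition.zero_of_nonpos (sub_nonpos.2 (not_le.1 hx).le)]
  have hXY {M : ℝ} {x : E} (hx : q x ≤ M - 1) : X M x = Y x := by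
    simp [X, smoothTransition.one_of_one_le (by linarith : 1 ≤ M - q x)]
  choose φ hφ using fun M ↦ exists_isFlowOf_of_hasCompactSupport (hX M) (hXs M)
  have hinv (M : ℝ) (x : E) (t : ℝ) : q (φ M t x) ≤ max B (q x) := by
    have hd (t : ℝ) :
        HasDerivAt (fun t ↦ q (φ M t x)) (fderiv ℝ q (φ M t x) (X M (φ M t x))) t :=
      (hq.differentiable one_ne_zero _).hasFDerivAt.comp_hasDerivAt t
        ((hφ M).isIntegralCurve x t)
    simpa [(hφ M).zero] using
      le_max_of_hasDerivAt_eq_zero hd (fun t ht ↦ by simp [X, htan _ ht]) t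
  -- by `hinv`, once `M ≥ N x` the trajectory of `X M` through `x` stays where `X M = Y`
  set N : E → ℝ := fun x ↦ max B (q x) + 1
  have hXN {M : ℝ} {x : E} (hM : N x ≤ M) (t : ℝ) : X M (φ (N x) t x) = Y (φ (N x) t x) :=
    hXY (by linarith [hinv (N x) x t])
  have hagree {M : ℝ} {x : E} (hM : N x ≤ M) : (φ M · x) = (φ (N x) · x) := by
    obtain ⟨K, hK⟩ := (hX M).lipschitzWith_of_hasCompactSupport (hXs M) one_ne_zero
    refine ((hφ M).isIntegralCurve x).eq_of_lipschitzWith hK (fun t ↦ ?_) (t₀ := 0)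
      (by simp [(hφ _).zero])
    simpa [hXN hM, ← hXN le_rfl] using (hφ (N x)).isIntegralCurve x t
  refine ⟨fun t x ↦ φ (N x) t x, ?_, fun x ↦ (hφ _).zero x, fun x t ↦ ?_, fun x t s ↦ ?_⟩
  · refine continuous_iff_continuousAt.2 fun ⟨t₀, x₀⟩ ↦ ?_
    have hU : {p : ℝ × E | q p.2 < q x₀ + 1} ∈ 𝓝 (t₀, x₀) :=
      (isOpen_lt (hq.continuous.comp continuous_snd) continuous_const).mem_nhds (by simp)
    refine ((hφ (max B (q x₀ + 1) + 1)).continuous.continuousAt).congr ?_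
    filter_upwards [hU] with p hp
    exact congrFun (hagree (by simp only [N]; gcongr)) p.1
  · simpa [← hXN le_rfl] using (hφ (N x)).isIntegralCurve x t
  · have hN : N (φ (N x) t x) ≤ N x := by
      simpa only [N, add_le_add_iff_right] using max_le (le_max_left _ _) (hinv _ x t)
    rw [← congrFun (hagree hN) s, (hφ _).add]

end Flow

theorem exists_homeomorph_of_flow {X : Type*} [TopologicalSpace X] {f : X → ℝ}
    (hf : Continuous f) {Ψ : ℝ → X → X} (hΨ : Continuous (uncurry Ψ)) (h0 : ∀ x, Ψ 0 x = x)
    (hadd : ∀ x t s, Ψ s (Ψ t x) = Ψ (s + t) x) {c δ : ℝ}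
    (hlev : ∀ x t, f x ∈ Ioo (c - δ) (c + δ) → f x + t ∈ Ioo (c - δ) (c + δ) →
      f (Ψ t x) = f x + t) :
    ∃ Φ : {x // f x ∈ Ioo (c - δ) (c + δ)} ≃ₜ Ioo (c - δ) (c + δ) × {x // f x = c},
      ∀ x, ((Φ x).1 : ℝ) = f x.1 := by
  have hc {u : ℝ} (hu : u ∈ Ioo (c - δ) (c + δ)) : c ∈ Ioo (c - δ) (c + δ) := by
    constructor <;> linarith [hu.1, hu.2]
  have hto (x : {x // f x ∈ Ioo (c - δ) (c + δ)}) : f (Ψ (c - f x) x) = c := by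
    rw [hlev _ _ x.2 (by rw [add_sub_cancel]; exact hc x.2)]; ring
  have hfrom (p : Ioo (c - δ) (c + δ) × {x // f x = c}) : f (Ψ (p.1 - c) p.2) = p.1 := by
    rw [hlev _ _ (by rw [p.2.2]; exact hc p.1.2) (by rw [p.2.2, add_sub_cancel]; exact p.1.2),
      p.2.2]
    ring
  refine ⟨{
    toFun x := (⟨f x, x.2⟩, ⟨Ψ (c - f x) x, hto x⟩)
    invFun p := ⟨Ψ (p.1 - c) p.2, by simp [hfrom]⟩
    left_inv x := Subtype.ext <| by simp [hadd, h0]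
    right_inv p := Prod.ext (Subtype.ext (hfrom p)) (Subtype.ext <| by simp [hfrom, hadd, h0])
    continuous_toFun := .prodMk ((hf.comp continuous_subtype_val).subtype_mk _)
      ((hΨ.comp ((continuous_const.sub (hf.comp continuous_subtype_val)).prodMk
        continuous_subtype_val)).subtype_mk _)
    continuous_invFun := (hΨ.comp (((continuous_subtype_val.comp continuous_fst).sub
      continuous_const).prodMk (continuous_subtype_val.comp continuous_snd))).subtype_mk
      fun p ↦ by simp [hfrom] },
    fun x ↦ rfl⟩

section TangentialLift

variable {F : Type*} [NormedAddCommGroup F] [InnerProductSpace ℝ F]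

/-- `g / ‖g‖²` corrected along the component `a - (⟪g, a⟫ / ‖g‖²) • g` of `a` orthogonal
to `g`. -/
noncomputable def tangentialLift (g a : F) (χ : ℝ) : F :=
  (‖g‖ ^ 2)⁻¹ • g +
    (χ * (⟪g, a⟫ / (‖g‖ ^ 2 * ‖a‖ ^ 2 - ⟪g, a⟫ ^ 2))) • ((⟪g, a⟫ / ‖g‖ ^ 2) • g - a)

variable {g a : F} {χ : ℝ}

@[simp]
lemma tangentialLift_zero : tangentialLift g a 0 = (‖g‖ ^ 2)⁻¹ • g := by
  simp [tangentialLift]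

lemma inner_tangentialLift_left (hg : g ≠ 0) : ⟪g, tangentialLift g a χ⟫ = 1 := by
  have : ‖g‖ ≠ 0 := norm_ne_zero_iff.2 hg
  simp only [tangentialLift, inner_add_right, inner_smul_right, inner_sub_right,
    real_inner_self_eq_norm_sq]
  field_simp
  ring

lemma inner_tangentialLift_one_right (hg : g ≠ 0) (hD : ⟪g, a⟫ ^ 2 < ‖g‖ ^ 2 * ‖a‖ ^ 2) :
    ⟪a, tangentialLift g a 1⟫ = 0 := by
  have : ‖g‖ ≠ 0 := norm_ne_zero_iff.2 hg
  have : ‖g‖ ^ 2 * ‖a‖ ^ 2 - ⟪g, a⟫ ^ 2 ≠ 0 := (sub_pos.2 hD).ne'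
  simp only [tangentialLift, inner_add_right, inner_smul_right, inner_sub_right,
    real_inner_self_eq_norm_sq, real_inner_comm g a]
  field_simp
  ring

lemma ContDiffAt.tangentialLift {E : Type*} [NormedAddCommGroup E] [NormedSpace ℝ E]
    {n : WithTop ℕ∞} {g a : E → F} {χ : E → ℝ} {x : E} (hg : ContDiffAt ℝ n g x)
    (ha : ContDiffAt ℝ n a x) (hχ : ContDiffAt ℝ n χ x) (hg0 : g x ≠ 0)
    (hD : ⟪g x, a x⟫ ^ 2 < ‖g x‖ ^ 2 * ‖a x‖ ^ 2) :
    ContDiffAt ℝ n (fun y ↦ _root_.tangentialLift (g y) (a y) (χ y)) x := by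
  have hg2 : ‖g x‖ ^ 2 ≠ 0 := by positivity
  have hD' : ‖g x‖ ^ 2 * ‖a x‖ ^ 2 - ⟪g x, a x⟫ ^ 2 ≠ 0 := (sub_pos.2 hD).ne'
  have hgn := hg.norm_sq ℝ
  have hga := hg.inner ℝ ha
  exact ((hgn.inv hg2).smul hg).add
    ((hχ.mul (hga.div ((hgn.mul (ha.norm_sq ℝ)).sub (hga.pow 2)) hD')).smul
      (((hga.div hgn hg2).smul hg).sub ha))

lemma sq_inner_lt_of_abs_inner_le {γ : ℝ} (hg : g ≠ 0) (ha : a ≠ 0)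
    (h : |⟪‖g‖⁻¹ • g, ‖a‖⁻¹ • a⟫| ≤ γ) (hγ : γ < 1) : ⟪g, a⟫ ^ 2 < ‖g‖ ^ 2 * ‖a‖ ^ 2 := by
  have hg' : 0 < ‖g‖ := norm_pos_iff.2 hg
  have ha' : 0 < ‖a‖ := norm_pos_iff.2 ha
  rw [real_inner_smul_left, real_inner_smul_right, abs_mul, abs_mul, abs_inv, abs_inv, abs_norm,
    abs_norm] at h
  have : |⟪g, a⟫| < ‖g‖ * ‖a‖ :=
    calc |⟪g, a⟫| = ‖g‖ * ‖a‖ * (‖g‖⁻¹ * (‖a‖⁻¹ * |⟪g, a⟫|)) := by field_simp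
    _ < ‖g‖ * ‖a‖ * 1 := by gcongr; linarith
    _ = ‖g‖ * ‖a‖ := mul_one _
  rw [← sq_abs, ← mul_pow]
  exact pow_lt_pow_left₀ this (abs_nonneg _) two_ne_zero

end TangentialLift

section QuadraticForm

variable {F : Type*} [NormedAddCommGroup F] [InnerProductSpace ℝ F] (T : F →L[ℝ] F)

lemma fderiv_inner_apply_self (hT : (T : F →ₗ[ℝ] F).IsSymmetric) (x v : F) :
    fderiv ℝ (fun x ↦ ⟪T x, x⟫) x v = 2 * ⟪T x, v⟫ := by
  rw [fderiv_inner_apply ℝ T.differentiableAt differentiableAt_fun_id, fderiv_fun_id, T.fderiv,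
    ContinuousLinearMap.id_apply, two_mul]
  exact congrArg _ ((hT v x).trans (real_inner_comm _ _))

variable [FiniteDimensional ℝ F]

lemma exists_pos_mul_norm_sq_le_inner_apply_self (hpos : ∀ x ≠ 0, 0 < ⟪T x, x⟫) :
    ∃ μ > 0, ∀ x, μ * ‖x‖ ^ 2 ≤ ⟪T x, x⟫ := by
  rcases subsingleton_or_nontrivial F with hF | hF
  · exact ⟨1, one_pos, fun x ↦ by simp [Subsingleton.elim x 0]⟩
  obtain ⟨z, hz, hmin⟩ := (isCompact_sphere (0 : F) 1).exists_isMinOn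
    (NormedSpace.sphere_nonempty.2 zero_le_one)
    (by fun_prop : Continuous fun x ↦ ⟪T x, x⟫).continuousOn
  refine ⟨⟪T z, z⟫, hpos z (ne_of_mem_sphere hz one_ne_zero), fun x ↦ ?_⟩
  rcases eq_or_ne x 0 with rfl | hx
  · simp
  have hx' : 0 < ‖x‖ := norm_pos_iff.2 hx
  have := hmin (a := ‖x‖⁻¹ • x) (by simp [norm_smul, hx'.ne'])
  simp only [mem_ofPred_eq, map_smul, inner_smul_left, inner_smul_right,
    RCLike.conj_to_real] at this
  calc ⟪T z, z⟫ * ‖x‖ ^ 2 ≤ ‖x‖⁻¹ * (‖x‖⁻¹ * ⟪T x, x⟫) * ‖x‖ ^ 2 := by gcongr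
  _ = ⟪T x, x⟫ := by field_simp

lemma isCompact_setOf_inner_apply_self_le (hpos : ∀ x ≠ 0, 0 < ⟪T x, x⟫) (M : ℝ) :
    IsCompact {x | ⟪T x, x⟫ ≤ M} := by
  obtain ⟨μ, hμ, hμT⟩ := exists_pos_mul_norm_sq_le_inner_apply_self T hpos
  refine (isCompact_closedBall (0 : F) √(M / μ)).of_isClosed_subset
    (isClosed_le (by fun_prop) continuous_const) fun x hx ↦ ?_
  rw [mem_closedBall_zero_iff, ← abs_norm]
  exact Real.abs_le_sqrt (by rw [le_div_iff₀ hμ]; linarith [hμT x, hx.out])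

end QuadraticForm

section LevelField

variable {F : Type*} [NormedAddCommGroup F] [InnerProductSpace ℝ F] [CompleteSpace F]

lemma contDiff_gradient {f : F → ℝ} (hf : ContDiff ℝ 2 f) : ContDiff ℝ 1 (gradient f) :=
  (InnerProductSpace.toDual ℝ F).symm.contDiff.comp (hf.fderiv_right one_add_one_eq_two.le)

open Real in
/-- The correction of `∇f / ‖∇f‖²` is switched on off the ellipsoid `⟪T x, x⟫ ≤ R ^ 2` and is
complete off `⟪T x, x⟫ ≤ R ^ 2 + 1`. -/
noncomputable def levelField (f : F → ℝ) (θ : ℝ → ℝ) (T : F →L[ℝ] F) (R : ℝ) (x : F) : F :=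
  θ (f x) • tangentialLift (gradient f x) (T x) (smoothTransition (⟪T x, x⟫ - R ^ 2))

variable {f : F → ℝ} {θ : ℝ → ℝ} {T : F →L[ℝ] F} {R : ℝ}

lemma inner_gradient_levelField {x : F} (hx : θ (f x) ≠ 0 → gradient f x ≠ 0) :
    ⟪gradient f x, levelField f θ T R x⟫ = θ (f x) := by
  by_cases h : θ (f x) = 0
  · simp [levelField, h]
  · rw [levelField, inner_smul_right, inner_tangentialLift_left (hx h), mul_one]

lemma inner_levelField_eq_zero {x : F} (hq : R ^ 2 + 1 ≤ ⟪T x, x⟫)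
    (hx : θ (f x) ≠ 0 →
      gradient f x ≠ 0 ∧ ⟪gradient f x, T x⟫ ^ 2 < ‖gradient f x‖ ^ 2 * ‖T x‖ ^ 2) :
    ⟪T x, levelField f θ T R x⟫ = 0 := by
  by_cases h : θ (f x) = 0
  · simp [levelField, h]
  · rw [levelField, Real.smoothTransition.one_of_one_le (by linarith), inner_smul_right,
      inner_tangentialLift_one_right (hx h).1 (hx h).2, mul_zero]

lemma contDiff_levelField (hf : ContDiff ℝ 2 f) (hθ : ContDiff ℝ 1 θ)
    (hreg : ∀ x ∈ tsupport (θ ∘ f), gradient f x ≠ 0)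
    (hangle : ∀ x ∈ tsupport (θ ∘ f), R ^ 2 ≤ ⟪T x, x⟫ →
      ⟪gradient f x, T x⟫ ^ 2 < ‖gradient f x‖ ^ 2 * ‖T x‖ ^ 2) :
    ContDiff ℝ 1 (levelField f θ T R) := by
  refine contDiff_iff_contDiffAt.2 fun x ↦ ?_
  have hθf : ContDiffAt ℝ 1 (fun y ↦ θ (f y)) x := (hθ.comp (hf.of_le one_le_two)).contDiffAt
  have hg : ContDiffAt ℝ 1 (gradient f) x := (contDiff_gradient hf).contDiffAt
  have hq : ContDiff ℝ 1 fun y ↦ ⟪T y, y⟫ := T.contDiff.inner ℝ contDiff_id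
  by_cases hx : x ∈ tsupport (θ ∘ f)
  swap
  · refine (contDiffAt_const (c := (0 : F))).congr_of_eventuallyEq ?_
    filter_upwards [notMem_tsupport_iff_eventuallyEq.1 hx] with y hy
    simp_all [levelField]
  rcases lt_or_ge ⟪T x, x⟫ (R ^ 2) with hlt | hge
  · have hg0 : ‖gradient f x‖ ^ 2 ≠ 0 := by simpa using hreg x hx
    refine (hθf.smul ((hg.norm_sq ℝ |>.inv hg0).smul hg)).congr_of_eventuallyEq ?_
    filter_upwards [(isOpen_lt hq.continuous continuous_const).mem_nhds hlt] with y hy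
    simp [levelField, Real.smoothTransition.zero_of_nonpos (sub_nonpos.2 (le_of_lt hy))]
  · exact hθf.smul (hg.tangentialLift T.contDiff.contDiffAt
      (Real.smoothTransition.contDiff.comp (hq.sub contDiff_const)).contDiffAt (hreg x hx)
      (hangle x hx hge))

end LevelField

theorem exists_homeomorph_of_sq_inner_lt {F : Type*} [NormedAddCommGroup F]
    [InnerProductSpace ℝ F] [FiniteDimensional ℝ F] {f : F → ℝ} (hf : ContDiff ℝ 2 f) {c ε : ℝ}
    (hε : 0 < ε) (hreg : ∀ x, |f x - c| < ε → gradient f x ≠ 0) {T : F →L[ℝ] F}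
    (hT : (T : F →ₗ[ℝ] F).IsSymmetric) (hpos : ∀ x ≠ 0, 0 < ⟪T x, x⟫) {R : ℝ}
    (hangle : ∀ x, |f x - c| < ε → R ^ 2 ≤ ⟪T x, x⟫ →
      ⟪gradient f x, T x⟫ ^ 2 < ‖gradient f x‖ ^ 2 * ‖T x‖ ^ 2) :
    ∃ δ : ℝ, 0 < δ ∧ δ ≤ ε ∧
      ∃ Φ : {x // f x ∈ Ioo (c - δ) (c + δ)} ≃ₜ Ioo (c - δ) (c + δ) × {x // f x = c},
        ∀ x, ((Φ x).1 : ℝ) = f x.1 := by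
  let θ : ContDiffBump c := ⟨ε / 2, 3 * ε / 4, by positivity, by linarith⟩
  have hband {x : F} (hx : x ∈ tsupport (θ ∘ f)) : |f x - c| < ε := by
    have := tsupport_comp_subset_preimage θ hf.continuous hx
    rw [θ.tsupport_eq, mem_preimage, mem_closedBall, Real.dist_eq] at this
    exact this.trans_lt (by simp [θ]; linarith)
  have hband' {x : F} (hx : θ (f x) ≠ 0) : |f x - c| < ε := hband (subset_tsupport _ hx)
  obtain ⟨Ψ, hΨ⟩ := exists_isFlowOf_of_fderiv_eq_zero (q := fun x ↦ ⟪T x, x⟫)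
    (contDiff_levelField (R := R) hf θ.contDiff (fun x hx ↦ hreg x (hband hx))
      fun x hx ↦ hangle x (hband hx))
    (T.contDiff.inner ℝ contDiff_id) (isCompact_setOf_inner_apply_self_le T hpos)
    (B := R ^ 2 + 1) fun x hx ↦ by
      rw [fderiv_inner_apply_self T hT, inner_levelField_eq_zero hx fun h ↦
        ⟨hreg x (hband' h), hangle x (hband' h) (by linarith)⟩, mul_zero]
  obtain ⟨K, hK⟩ := θ.contDiff.lipschitzWith_of_hasCompactSupport θ.hasCompactSupport one_ne_zero
  refine ⟨ε / 2, by positivity, by linarith, exists_homeomorph_of_flow hf.continuous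
    hΨ.continuous hΨ.zero hΨ.add fun x t hx hxt ↦ ?_⟩
  have hd (s : ℝ) : HasDerivAt (fun s ↦ f (Ψ s x)) (θ (f (Ψ s x))) s := by
    have := (hf.differentiable two_ne_zero _).hasFDerivAt.comp_hasDerivAt s
      (hΨ.isIntegralCurve x s)
    rwa [← inner_gradient_left, inner_gradient_levelField fun h ↦ hreg _ (hband' h)] at this
  have hθ1 (u : ℝ) (hu : u ∈ Ioo (c - ε / 2) (c + ε / 2)) : θ u = 1 :=
    θ.one_of_mem_closedBall (by
      rw [mem_closedBall, Real.dist_eq, abs_le]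
      constructor <;> linarith [hu.1, hu.2, show θ.rIn = ε / 2 from rfl])
  simpa [hΨ.zero] using eq_add_of_hasDerivAt_of_eqOn_one hK hd hθ1
    (by simpa [hΨ.zero] using hx) (by simpa [hΨ.zero] using hxt)

theorem statement14_general {n : ℕ} (f : EuclideanSpace ℝ (Fin n) → ℝ) (hf : ContDiff ℝ 2 f)
    (c ε : ℝ) (hε : 0 < ε)
    (hreg : ∀ x : EuclideanSpace ℝ (Fin n), |f x - c| < ε → gradient f x ≠ 0)
    (A : Matrix (Fin n) (Fin n) ℝ) (hposdef : A.PosDef)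
    (γ : ℝ) (hγ : γ ∈ Set.Ioo (0:ℝ) 1) (R : ℝ) (hR : 0 < R)
    (hbound : ∀ x : EuclideanSpace ℝ (Fin n), |f x - c| < ε →
      R ≤ Real.sqrt ⟪matApply A x, x⟫ →
      |⟪(‖gradient f x‖)⁻¹ • gradient f x, (‖matApply A x‖)⁻¹ • matApply A x⟫| ≤ γ) :
    ∃ δ : ℝ, 0 < δ ∧ δ ≤ ε ∧
      ∃ Φ : {x : EuclideanSpace ℝ (Fin n) // f x ∈ Set.Ioo (c - δ) (c + δ)} ≃ₜ
             (Set.Ioo (c - δ) (c + δ)) × {x : EuclideanSpace ℝ (Fin n) // f x = c},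
        ∀ x, ((Φ x).1 : ℝ) = f x.1 := by
  set T := Matrix.toEuclideanCLM (𝕜 := ℝ) A
  have hT : (T : EuclideanSpace ℝ (Fin n) →ₗ[ℝ] EuclideanSpace ℝ (Fin n)).IsSymmetric :=
    Matrix.isSymmetric_toEuclideanLin_iff.2 hposdef.isHermitian
  have hpos (x : EuclideanSpace ℝ (Fin n)) (hx : x ≠ 0) : 0 < ⟪T x, x⟫ := by
    rw [real_inner_comm, Matrix.inner_toEuclideanCLM]
    simpa using hposdef.dotProduct_mulVec_pos (x := WithLp.ofLp x) (by simpa using hx)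
  refine exists_homeomorph_of_sq_inner_lt hf hε hreg hT hpos (R := R) fun x hx hRx ↦ ?_
  have hTx : T x ≠ 0 := by
    intro h
    have := hpos x (by rintro rfl; simp at hRx; nlinarith)
    simp [h] at this
  exact sq_inner_lt_of_abs_inner_le (hreg x hx) hTx
    (hbound x hx (le_of_abs_le (Real.abs_le_sqrt hRx))) hγ.2

/-- Let `f : ℝⁿ → ℝ` be `C²`, `c ∈ ℝ`, `ε > 0`, with `∇f(x) ≠ 0` whenever `|f(x) − c| < ε`.
Suppose there are a symmetric positive definite matrix `A`, `γ ∈ (0,1)` and `R > 0` such that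
`|⟨∇f(x)/‖∇f(x)‖, Ax/‖Ax‖⟩| ≤ γ` whenever `|f(x) − c| < ε` and `⟨Ax, x⟩^{1/2} ≥ R`.
Then `f` is locally trivial over a neighbourhood of `c`: there are `0 < δ ≤ ε` and a
homeomorphism `Φ : f⁻¹((c−δ, c+δ)) ≃ (c−δ, c+δ) × f⁻¹(c)` whose first component is `f`;
in particular `c` is not a bifurcation value of `f`. -/
theorem statement14 {n : ℕ} (f : EuclideanSpace ℝ (Fin n) → ℝ) (hf : ContDiff ℝ 2 f)
    (c ε : ℝ) (hε : 0 < ε)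
    (hreg : ∀ x : EuclideanSpace ℝ (Fin n), |f x - c| < ε → gradient f x ≠ 0)
    (A : Matrix (Fin n) (Fin n) ℝ) (hsymm : A.IsSymm) (hposdef : A.PosDef)
    (γ : ℝ) (hγ : γ ∈ Set.Ioo (0:ℝ) 1) (R : ℝ) (hR : 0 < R)
    (hbound : ∀ x : EuclideanSpace ℝ (Fin n), |f x - c| < ε →
      R ≤ Real.sqrt ⟪matApply A x, x⟫ →
      |⟪(‖gradient f x‖)⁻¹ • gradient f x, (‖matApply A x‖)⁻¹ • matApply A x⟫| ≤ γ) :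
    ∃ δ : ℝ, 0 < δ ∧ δ ≤ ε ∧
      ∃ Φ : {x : EuclideanSpace ℝ (Fin n) // f x ∈ Set.Ioo (c - δ) (c + δ)} ≃ₜ
             (Set.Ioo (c - δ) (c + δ)) × {x : EuclideanSpace ℝ (Fin n) // f x = c},
        ∀ x, ((Φ x).1 : ℝ) = f x.1 :=
  statement14_general f hf c ε hε hreg A hposdef γ hγ R hR hbound
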